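/- The family F = {f_n : n ∈ ℕ}, f_n(z) = n z⁴ + n z³, is not normal on the open unit disk, even though with a_{1f_n}(z) = n z³, a_{2f_n}(z) = n z⁴, a_{3f_n}(z) = n(z − 1/2)³ + n z⁴ + n z³, every zero of f_n − a_{1 f_n} has multiplicity at least four and every zero of f_n − a_{j f_n} (j = 2,3) has multiplicity at least three. Hence the spherical separation hypothesis σ(a_{jf}, a_{kf}) ≥ ε cannot be dropped from the multiplicity-based normality criterion. -/
import Mathlib

open Filter Topology OnePoint Metric
open scoped Classical

noncomputable def chord : OnePoint ℂ → OnePoint ℂ → ℝ := fun x y =>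
  Option.elim (α := ℂ) x
    (Option.elim (α := ℂ) y 0 (fun b => 2 / Real.sqrt (1 + ‖b‖ ^ 2)))
    (fun a =>
      Option.elim (α := ℂ) y (2 / Real.sqrt (1 + ‖a‖ ^ 2))
        (fun b => 2 * ‖a - b‖ / Real.sqrt ((1 + ‖a‖ ^ 2) * (1 + ‖b‖ ^ 2))))

/-- spherical (arclength) metric on the Riemann sphere, diameter π -/
noncomputable def sph (x y : OnePoint ℂ) : ℝ := 2 * Real.arcsin (chord x y / 2)

/-- value of a meromorphic function as a point of the Riemann sphere -/
noncomputable def sphVal (f : ℂ → ℂ) (z : ℂ) : OnePoint ℂ :=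
  if Tendsto (fun w => ‖f w‖) (𝓝[≠] z) atTop then ∞
  else (((limUnder (𝓝[≠] z) f : ℂ) : OnePoint ℂ))

def IsMeroSphere (D : Set ℂ) (A : ℂ → OnePoint ℂ) : Prop :=
  ∃ a : ℂ → ℂ, MeromorphicOn a D ∧ ∀ z ∈ D, A z = sphVal a z

def IsMeroSphereOrInf (D : Set ℂ) (A : ℂ → OnePoint ℂ) : Prop :=
  IsMeroSphere D A ∨ ∀ z ∈ D, A z = ∞

/-- Normality: every sequence has a subsequence converging locally uniformly (spherically)
to a meromorphic function or to ∞. -/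
def NormalOn (D : Set ℂ) (F : Set (ℂ → ℂ)) : Prop :=
  ∀ f : ℕ → ℂ → ℂ, (∀ n, f n ∈ F) →
    ∃ φ : ℕ → ℕ, StrictMono φ ∧ ∃ G : ℂ → OnePoint ℂ,
      IsMeroSphereOrInf D G ∧
      ∀ K : Set ℂ, K ⊆ D → IsCompact K → ∀ ε : ℝ, 0 < ε →
        ∀ᶠ n in atTop, ∀ z ∈ K, sph (sphVal (f (φ n)) z) (G z) < ε

/-- rational map of degree at most m -/
def IsRatDegLE (m : ℕ) (R : ℂ → ℂ) : Prop :=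
  ∃ p q : Polynomial ℂ, q ≠ 0 ∧ p.degree ≤ (m : ℕ) ∧ q.degree ≤ (m : ℕ) ∧
    ∀ z : ℂ, R z = p.eval z / q.eval z

lemma chord_coe_coe' (a b : ℂ) :
    chord (a : OnePoint ℂ) (b : OnePoint ℂ)
      = 2 * ‖a - b‖ / Real.sqrt ((1 + ‖a‖ ^ 2) * (1 + ‖b‖ ^ 2)) := rfl

lemma chord_coe_infty' (a : ℂ) : chord (a : OnePoint ℂ) ∞ = 2 / Real.sqrt (1 + ‖a‖ ^ 2) := rfl

lemma sphVal_of_continuousAt' {f : ℂ → ℂ} {z : ℂ} (h : ContinuousAt f z) :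
    sphVal f z = (f z : OnePoint ℂ) := by
  have ht : Tendsto f (𝓝[≠] z) (𝓝 (f z)) := h.continuousWithinAt.tendsto
  have hn : ¬ Tendsto (fun w => ‖f w‖) (𝓝[≠] z) atTop :=
    not_tendsto_atTop_of_tendsto_nhds ht.norm
  rw [sphVal, if_neg hn, ht.limUnder_eq]

theorem example_mult_not_normal :
    (∀ n : ℕ, ∀ z₀ ∈ Metric.ball (0:ℂ) 1,
      ((((n:ℂ)+1) * z₀^4 + ((n:ℂ)+1) * z₀^3) - ((n:ℂ)+1) * z₀^3 = 0 →
      ∃ g : ℂ → ℂ, AnalyticAt ℂ g z₀ ∧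
        ∀ z : ℂ, (((n:ℂ)+1) * z^4 + ((n:ℂ)+1) * z^3) - ((n:ℂ)+1) * z^3
          = (z - z₀)^4 * g z)) ∧
    (∀ n : ℕ, ∀ z₀ ∈ Metric.ball (0:ℂ) 1,
      ((((n:ℂ)+1) * z₀^4 + ((n:ℂ)+1) * z₀^3) - ((n:ℂ)+1) * z₀^4 = 0 →
      ∃ g : ℂ → ℂ, AnalyticAt ℂ g z₀ ∧
        ∀ z : ℂ, (((n:ℂ)+1) * z^4 + ((n:ℂ)+1) * z^3) - ((n:ℂ)+1) * z^4
          = (z - z₀)^3 * g z)) ∧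
    (∀ n : ℕ, ∀ z₀ ∈ Metric.ball (0:ℂ) 1,
      ((((n:ℂ)+1) * z₀^4 + ((n:ℂ)+1) * z₀^3)
          - (((n:ℂ)+1) * (z₀ - 1/2)^3 + ((n:ℂ)+1) * z₀^4 + ((n:ℂ)+1) * z₀^3) = 0 →
      ∃ g : ℂ → ℂ, AnalyticAt ℂ g z₀ ∧
        ∀ z : ℂ, (((n:ℂ)+1) * z^4 + ((n:ℂ)+1) * z^3)
          - (((n:ℂ)+1) * (z - 1/2)^3 + ((n:ℂ)+1) * z^4 + ((n:ℂ)+1) * z^3)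
          = (z - z₀)^3 * g z)) ∧
    ¬ NormalOn (Metric.ball (0:ℂ) 1)
        {g | ∃ n : ℕ, g = fun z : ℂ => ((n:ℂ)+1) * z^4 + ((n:ℂ)+1) * z^3} := by
  have hn1 : ∀ n : ℕ, ((n:ℂ)+1) ≠ 0 := fun n => Nat.cast_add_one_ne_zero n
  refine ⟨?_, ?_, ?_, ?_⟩
  · intro n z₀ _ h
    have hz : z₀ = 0 := by
      have h4 : ((n:ℂ)+1) * z₀^4 = 0 := by linear_combination h
      rcases mul_eq_zero.1 h4 with h' | h'
      · exact absurd h' (hn1 n)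
      · exact pow_eq_zero_iff (by norm_num) |>.1 h'
    exact ⟨fun _ => (n:ℂ)+1, analyticAt_const, fun z => by rw [hz]; ring⟩
  · intro n z₀ _ h
    have hz : z₀ = 0 := by
      have h4 : ((n:ℂ)+1) * z₀^3 = 0 := by linear_combination h
      rcases mul_eq_zero.1 h4 with h' | h'
      · exact absurd h' (hn1 n)
      · exact pow_eq_zero_iff (by norm_num) |>.1 h'
    exact ⟨fun _ => (n:ℂ)+1, analyticAt_const, fun z => by rw [hz]; ring⟩
  · intro n z₀ _ h
    have hz : z₀ = 1/2 := by
      have h4 : ((n:ℂ)+1) * (z₀ - 1/2)^3 = 0 := by linear_combination -h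
      rcases mul_eq_zero.1 h4 with h' | h'
      · exact absurd h' (hn1 n)
      · have := pow_eq_zero_iff (n := 3) (by norm_num) |>.1 h'
        linear_combination this
    exact ⟨fun _ => -((n:ℂ)+1), analyticAt_const, fun z => by rw [hz]; ring⟩
  · intro hN
    obtain ⟨φ, hφ, G, hG, hconv⟩ :=
      hN (fun n z => ((n:ℂ)+1) * z^4 + ((n:ℂ)+1) * z^3) (fun n => ⟨n, rfl⟩)
    have hcont : ∀ (n : ℕ) (z : ℂ),
        ContinuousAt (fun z : ℂ => ((n:ℂ)+1) * z^4 + ((n:ℂ)+1) * z^3) z := by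
      intro n z; fun_prop
    have h0mem : (0:ℂ) ∈ Metric.ball (0:ℂ) 1 := by simp
    have hG0 : G 0 ≠ ∞ := by
      intro hinf
      obtain ⟨n, hn⟩ := (hconv {0} (by simp) isCompact_singleton 1 one_pos).exists
      have h1 := hn 0 rfl
      rw [sphVal_of_continuousAt' (hcont (φ n) 0), hinf] at h1
      have hv : ((φ n : ℂ)+1) * (0:ℂ)^4 + ((φ n : ℂ)+1) * (0:ℂ)^3 = 0 := by ring
      rw [hv] at h1
      have hπ : sph ((0:ℂ) : OnePoint ℂ) ∞ = Real.pi := by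
        rw [sph, chord_coe_infty']
        norm_num [Real.arcsin_one]
        ring
      rw [hπ] at h1
      linarith [Real.pi_gt_three]
    rcases hG with ⟨a, ha, haG⟩ | hinf
    · have h14 : (1/4 : ℂ) ∈ Metric.ball (0:ℂ) 1 := by
        simp only [Metric.mem_ball, dist_zero_right]
        norm_num
      have hma := (ha (1/4) h14).eventually_analyticAt
      have hball : ∀ᶠ z in 𝓝[≠] (1/4:ℂ), z ∈ Metric.ball (0:ℂ) 1 :=
        (eventually_nhdsWithin_of_eventually_nhds
          (Metric.isOpen_ball.mem_nhds h14 : Metric.ball (0:ℂ) 1 ∈ 𝓝 (1/4:ℂ)))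
      have hne0 : ∀ᶠ z in 𝓝[≠] (1/4:ℂ), z ≠ 0 :=
        eventually_nhdsWithin_of_eventually_nhds (eventually_ne_nhds (by norm_num))
      have hne1 : ∀ᶠ z in 𝓝[≠] (1/4:ℂ), z ≠ -1 :=
        eventually_nhdsWithin_of_eventually_nhds (eventually_ne_nhds (by norm_num))
      obtain ⟨w, hwa, hwb, hw0, hw1⟩ := (hma.and (hball.and (hne0.and hne1))).exists
      set c := a w with hc
      have hGw : G w = (c : OnePoint ℂ) := by
        rw [haG w hwb, sphVal_of_continuousAt' hwa.continuousAt]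
      have hr : 0 < ‖w^4 + w^3‖ := by
        rw [norm_pos_iff]
        intro h
        have h3 : w^3 * (w + 1) = 0 := by linear_combination h
        rcases mul_eq_zero.1 h3 with h' | h'
        · exact hw0 (pow_eq_zero_iff (by norm_num) |>.1 h')
        · exact hw1 (eq_neg_of_add_eq_zero_left h')
      set r := ‖w^4 + w^3‖ with hrdef
      set M := ‖c‖ with hM
      set s₂ := Real.sqrt (1 + M^2) with hs₂def
      have hs₂ : 0 < s₂ := Real.sqrt_pos.2 (by positivity)
      set ε := 2 * Real.arcsin (1/(2*s₂)) with hεdef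
      have hε : 0 < ε := by
        have := Real.arcsin_pos.2 (show (0:ℝ) < 1/(2*s₂) by positivity)
        linarith
      have hev := hconv {w} (by simpa using hwb) isCompact_singleton ε hε
      have h2 : ∀ᶠ n in atTop, 2*M+3 ≤ ((φ n : ℝ)+1) * r := by
        obtain ⟨N, hNr⟩ := exists_nat_ge ((2*M+3)/r)
        filter_upwards [eventually_ge_atTop N] with n hn
        have hφn : (N:ℝ) ≤ (φ n : ℝ) := by
          exact_mod_cast le_trans hn (hφ.le_apply)
        have : (2*M+3)/r ≤ (φ n : ℝ) + 1 := by linarith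
        calc 2*M+3 = (2*M+3)/r * r := by field_simp
          _ ≤ ((φ n : ℝ)+1) * r := by nlinarith
      obtain ⟨n, hsph, hbig⟩ := (hev.and h2).exists
      have h1 := hsph w rfl
      rw [sphVal_of_continuousAt' (hcont (φ n) w), hGw] at h1
      set u := ((φ n : ℂ)+1) * w^4 + ((φ n : ℂ)+1) * w^3 with hu
      have hnu : ‖u‖ = ((φ n : ℝ)+1) * r := by
        have h5 : u = ((φ n + 1 : ℕ) : ℂ) * (w^4 + w^3) := by push_cast; ring
        rw [h5, norm_mul, Complex.norm_natCast]
        push_cast; ring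
      have hub : 2*M+3 ≤ ‖u‖ := by rw [hnu]; exact hbig
      set s₁ := Real.sqrt (1 + ‖u‖^2) with hs₁def
      have hs₁ : 0 < s₁ := Real.sqrt_pos.2 (by positivity)
      have hch : chord (u : OnePoint ℂ) (c : OnePoint ℂ) / 2 = ‖u - c‖ / (s₁ * s₂) := by
        rw [chord_coe_coe', Real.sqrt_mul (by positivity), ← hs₁def, ← hM, ← hs₂def]
        ring
      have key : s₁ ≤ 2 * ‖u - c‖ := by
        have h6 : s₁ ≤ 1 + ‖u‖ := by
          rw [show (1+‖u‖) = Real.sqrt ((1+‖u‖)^2) from (Real.sqrt_sq (by positivity)).symm]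
          exact Real.sqrt_le_sqrt (by nlinarith [norm_nonneg u])
        have h7 : ‖u‖ - M ≤ ‖u - c‖ := by
          have := norm_sub_norm_le u c
          rw [← hM] at this; linarith
        linarith
      have hfrac : 1/(2*s₂) ≤ ‖u - c‖ / (s₁ * s₂) := by
        rw [div_le_div_iff₀ (by positivity) (by positivity)]
        nlinarith
      have := Real.monotone_arcsin hfrac
      rw [sph, hch] at h1
      rw [hεdef] at h1
      linarith
    · exact hG0 (hinf 0 h0mem)
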